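/- A real number x belongs to M(𝒞) if and only if there exist a nonnegative integer N and a sequence of digits d : {1,2,3,…} → {0,1,2} with d_i = 1 for all i > N such that x = Σ_{i=1}^{∞} d_i/3^{i}. In other words, M(𝒞) is exactly the set of points of the unit interval admitting a ternary expansion terminating in all 1's. -/
import Mathlib

/-- The similarity map `φ_p(x) = (x + p)/3` for a ternary digit `p`. -/
noncomputable def phi (p : ℕ) (x : ℝ) : ℝ := (x + p) / 3

/-- The IFS operator `Φ(K) = φ_0(K) ∪ φ_1(K) ∪ φ_2(K)`. -/
noncomputable def Phi (K : Set ℝ) : Set ℝ := phi 0 '' K ∪ phi 1 '' K ∪ phi 2 '' K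

/-- `M(n) = Φⁿ({1/2})`. -/
noncomputable def Mset (n : ℕ) : Set ℝ := Phi^[n] {1 / 2}

/-- `M(𝒞) = ⋃_{n ≥ 0} M(n)`. -/
noncomputable def MC : Set ℝ := ⋃ n, Mset n

noncomputable def Sd (d : ℕ → Fin 3) : ℝ := ∑' i : ℕ, ((d (i + 1) : ℕ) : ℝ) / 3 ^ (i + 1)

lemma summ (d : ℕ → Fin 3) : Summable (fun i : ℕ => ((d (i + 1) : ℕ) : ℝ) / 3 ^ (i + 1)) := by
  refine Summable.of_nonneg_of_le (fun i => by positivity)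
    (f := fun i : ℕ => (2/3 : ℝ) * (1/3)^i) ?_
    ((summable_geometric_of_lt_one (by norm_num) (by norm_num)).mul_left _)
  intro i
  have h2 : ((d (i+1) : ℕ) : ℝ) ≤ 2 := by
    have := (d (i+1)).is_lt
    exact_mod_cast Nat.lt_succ_iff.mp this
  have h3 : (2/3 : ℝ) * (1/3)^i = 2 / 3^(i+1) := by
    rw [div_pow, one_pow, pow_succ]; ring
  show ((d (i+1) : ℕ) : ℝ) / 3 ^ (i + 1) ≤ (2/3 : ℝ) * (1/3)^i
  rw [h3]
  gcongr

lemma Sd_one : Sd (fun _ => 1) = 1 / 2 := by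
  unfold Sd
  have h : ∀ i : ℕ, (((1 : Fin 3) : ℕ) : ℝ) / 3 ^ (i+1) = (1/3 : ℝ) * (1/3)^i := by
    intro i
    simp only [Fin.val_one, Nat.cast_one]
    rw [div_pow, one_pow, pow_succ]
    ring
  rw [tsum_congr h, tsum_mul_left, tsum_geometric_of_lt_one (by norm_num) (by norm_num)]
  norm_num

lemma phi_Sd (p : Fin 3) (d : ℕ → Fin 3) :
    phi (p : ℕ) (Sd d) = Sd (fun i => if i = 1 then p else d (i - 1)) := by
  set e : ℕ → Fin 3 := fun i => if i = 1 then p else d (i - 1) with he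
  have hs : Summable (fun i : ℕ => ((e (i + 1) : ℕ) : ℝ) / 3 ^ (i + 1)) := summ e
  have h0 : Sd e = ((e 1 : ℕ) : ℝ) / 3 + ∑' i : ℕ, ((e (i + 2) : ℕ) : ℝ) / 3 ^ (i + 2) := by
    unfold Sd
    rw [Summable.tsum_eq_zero_add hs]
    norm_num
  have h1 : ∀ i : ℕ, e (i + 2) = d (i + 1) := by
    intro i; simp [he]
  have h2 : ∀ i : ℕ, ((d (i + 1) : ℕ) : ℝ) / 3 ^ (i + 2) =
      (((d (i + 1) : ℕ) : ℝ) / 3 ^ (i + 1)) * (1/3) := by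
    intro i; rw [pow_succ]; ring
  have h3 : ∑' i : ℕ, ((e (i + 2) : ℕ) : ℝ) / 3 ^ (i + 2) = Sd d * (1/3) := by
    rw [tsum_congr (fun i => by rw [h1 i, h2 i]), tsum_mul_right]
    rfl
  have he1 : e 1 = p := by simp [he]
  rw [h0, h3, he1, phi]
  ring

lemma mem_Mset_iff (n : ℕ) (x : ℝ) (hx : x ∈ Mset n) :
    ∃ d : ℕ → Fin 3, (∀ i, n < i → d i = 1) ∧ x = Sd d := by
  induction n generalizing x with
  | zero =>
    simp only [Mset, Function.iterate_zero, id, Set.mem_singleton_iff] at hx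
    exact ⟨fun _ => 1, fun _ _ => rfl, by rw [hx, Sd_one]⟩
  | succ n ih =>
    rw [Mset, Function.iterate_succ_apply'] at hx
    have key : ∀ (p : Fin 3) (y : ℝ), y ∈ Mset n → x = phi (p : ℕ) y →
        ∃ d : ℕ → Fin 3, (∀ i, n + 1 < i → d i = 1) ∧ x = Sd d := by
      intro p y hy hxy
      obtain ⟨d, hd, rfl⟩ := ih y hy
      refine ⟨fun i => if i = 1 then p else d (i - 1), ?_, by rw [hxy, phi_Sd]⟩
      intro i hi
      have h1 : i ≠ 1 := by omega
      have h2 : n < i - 1 := by omega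
      simp [h1, hd _ h2]
    rcases hx with (⟨y, hy, hxy⟩ | ⟨y, hy, hxy⟩) | ⟨y, hy, hxy⟩
    · exact key 0 y hy (by rw [← hxy]; norm_num)
    · exact key 1 y hy (by rw [← hxy]; norm_num)
    · exact key 2 y hy (by rw [← hxy]; norm_num)

lemma Sd_mem_Mset (N : ℕ) (d : ℕ → Fin 3) (hd : ∀ i, N < i → d i = 1) : Sd d ∈ Mset N := by
  induction N generalizing d with
  | zero =>
    have h : Sd d = 1 / 2 := by
      have hc : ∀ i : ℕ, d (i + 1) = 1 := fun i => hd _ (Nat.succ_pos i)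
      rw [show Sd d = Sd (fun _ => 1) from tsum_congr (fun i => by rw [hc i]), Sd_one]
    simp [Mset, h]
  | succ N ih =>
    set d' : ℕ → Fin 3 := fun i => d (i + 1) with hd'
    have hmem : Sd d' ∈ Mset N := ih d' (fun i hi => hd _ (by omega))
    have heq : Sd d = phi ((d 1 : ℕ)) (Sd d') := by
      rw [phi_Sd]
      refine tsum_congr fun i => ?_
      have he : (if i + 1 = 1 then d 1 else d' (i + 1 - 1)) = d (i + 1) := by
        rcases Nat.eq_zero_or_pos i with h | h
        · simp [h, hd']
        · have h1 : i + 1 ≠ 1 := by omega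
          rw [if_neg h1, hd']
          simp
      simp only [hd'] at he ⊢
      rw [he]
    rw [Mset, Function.iterate_succ_apply', heq]
    have hmem' : Sd d' ∈ Phi^[N] {1/2} := hmem
    have hlt := (d 1).is_lt
    rcases (by omega : ((d 1 : ℕ)) = 0 ∨ ((d 1 : ℕ)) = 1 ∨ ((d 1 : ℕ)) = 2) with h | h | h <;>
      rw [h]
    · exact Or.inl (Or.inl ⟨_, hmem', rfl⟩)
    · exact Or.inl (Or.inr ⟨_, hmem', rfl⟩)
    · exact Or.inr ⟨_, hmem', rfl⟩

/-- `M(𝒞)` is exactly the set of points of the unit interval admitting a ternary expansion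
`x = Σ_{i=1}^∞ d_i/3^i` terminating in all `1`'s. -/
theorem stmt_5 (x : ℝ) :
    x ∈ MC ↔
      ∃ (N : ℕ) (d : ℕ → Fin 3),
        (∀ i, N < i → d i = 1) ∧ x = ∑' i : ℕ, ((d (i + 1) : ℕ) : ℝ) / 3 ^ (i + 1) := by
  constructor
  · rintro hx
    obtain ⟨n, hn⟩ := Set.mem_iUnion.mp hx
    obtain ⟨d, hd, hx⟩ := mem_Mset_iff n x hn
    exact ⟨n, d, hd, hx⟩
  · rintro ⟨N, d, hd, rfl⟩
    exact Set.mem_iUnion.mpr ⟨N, Sd_mem_Mset N d hd⟩
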